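/- arXiv:2103.12734 — 4 statements merged into one kernel-verified Lean document; each statement's English description precedes it below -/
import Mathlib

section
/- Let R = ℂ[z₁, z₂] and let K ⊆ R³ be the set of triples (f₁, f₂, f₃) satisfying (z₂−1)f₁ = (z₁−z₂)f₃ and (z₂−1)f₂ = (1−z₁)f₃. Then K is exactly the R-submodule of R³ generated by the single element (z₁−z₂, 1−z₁, z₂−1); i.e., K is a free cyclic R-module. -/
open MvPolynomial

noncomputable def pz₁ : MvPolynomial (Fin 2) ℂ := X 0
noncomputable def pz₂ : MvPolynomial (Fin 2) ℂ := X 1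

lemma prime_X0_sub_one : Prime (X 0 - 1 : MvPolynomial (Fin 1) ℂ) := by
  rw [← MulEquiv.prime_iff (finSuccEquiv ℂ 0).toMulEquiv]
  show Prime ((finSuccEquiv ℂ 0) (X 0 - 1))
  rw [map_sub, map_one, finSuccEquiv_X_zero]
  exact Polynomial.prime_X_sub_C 1

lemma prime_X1_sub_one : Prime (X 1 - 1 : MvPolynomial (Fin 2) ℂ) := by
  rw [← MulEquiv.prime_iff (finSuccEquiv ℂ 1).toMulEquiv]
  show Prime ((finSuccEquiv ℂ 1) (X 1 - 1))
  have h1 : (X 1 : MvPolynomial (Fin 2) ℂ) = X (Fin.succ 0) := rfl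
  rw [map_sub, map_one, h1, finSuccEquiv_X_succ]
  rw [show (1 : Polynomial (MvPolynomial (Fin 1) ℂ)) = Polynomial.C 1 from rfl,
    ← map_sub, Polynomial.prime_C_iff]
  exact prime_X0_sub_one

lemma not_dvd_aux : ¬ (pz₂ - 1 : MvPolynomial (Fin 2) ℂ) ∣ (pz₁ - pz₂) := by
  intro ⟨c, hc⟩
  have := congrArg (eval (fun i : Fin 2 => if i = 0 then (0 : ℂ) else 1)) hc
  simp [pz₁, pz₂] at this

theorem kagome_kernel_is_free_cyclic :
    {f : Fin 3 → MvPolynomial (Fin 2) ℂ |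
        (pz₂ - 1) * f 0 = (pz₁ - pz₂) * f 2 ∧ (pz₂ - 1) * f 1 = (1 - pz₁) * f 2}
      = (Submodule.span (MvPolynomial (Fin 2) ℂ)
          {![pz₁ - pz₂, 1 - pz₁, pz₂ - 1]} : Set (Fin 3 → MvPolynomial (Fin 2) ℂ)) := by
  have hp : Prime (pz₂ - 1 : MvPolynomial (Fin 2) ℂ) := prime_X1_sub_one
  have hp0 : (pz₂ - 1 : MvPolynomial (Fin 2) ℂ) ≠ 0 := hp.ne_zero
  ext f
  simp only [Set.mem_setOf_eq, SetLike.mem_coe, Submodule.mem_span_singleton]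
  constructor
  · rintro ⟨h1, h2⟩
    have hdvd : (pz₂ - 1) ∣ (pz₁ - pz₂) * f 2 := ⟨f 0, h1.symm⟩
    rcases (hp.dvd_mul.mp hdvd).resolve_left not_dvd_aux with ⟨g, hg⟩
    refine ⟨g, funext fun i => ?_⟩
    have e0 : f 0 = g * (pz₁ - pz₂) := by
      apply mul_left_cancel₀ hp0
      rw [h1, hg]; ring
    have e1 : f 1 = g * (1 - pz₁) := by
      apply mul_left_cancel₀ hp0
      rw [h2, hg]; ring
    fin_cases i
    · simpa using e0.symm
    · simpa using e1.symm
    · simpa [mul_comm] using hg.symm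
  · rintro ⟨a, rfl⟩
    constructor <;> simp <;> ring
end

section
/- Let Γ be a ℤ^d-periodic graph with finite fundamental domain W, Laplacian Δ, and eigenvalue λ. Then there exist finitely many finite-support λ-eigenfunctions f^{(1)}, ..., f^{(r)} such that every finite-support λ-eigenfunction of Δ is a finite ℂ-linear combination of ℤ^d-translates of f^{(1)}, ..., f^{(r)}. -/
noncomputable def graphLaplacian {V : Type*} (Γ : SimpleGraph V) [Γ.LocallyFinite]
    (f : V → ℂ) (v : V) : ℂ :=
  (1 / (Real.sqrt (Γ.degree v) : ℂ)) *
    ∑ w ∈ Γ.neighborFinset v,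
      (f w / (Real.sqrt (Γ.degree w) : ℂ) - f v / (Real.sqrt (Γ.degree v) : ℂ))

section aux
variable {d : ℕ} {V : Type*} [AddAction (Fin d → ℤ) V]

lemma pg_vadd_inj (g : Fin d → ℤ) : Function.Injective (fun v : V => g +ᵥ v) := by
  intro a b h
  have := congrArg (fun v => (-g) +ᵥ v) h
  simpa [vadd_vadd] using this

lemma pg_cancel (g : Fin d → ℤ) (v : V) : g +ᵥ ((-g) +ᵥ v) = v := by
  rw [vadd_vadd]; simp

lemma pg_cancel' (g : Fin d → ℤ) (v : V) : (-g) +ᵥ (g +ᵥ v) = v := by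
  rw [vadd_vadd]; simp

variable (Γ : SimpleGraph V) [Γ.LocallyFinite]
variable (hedge : ∀ (g : Fin d → ℤ) (u v : V), Γ.Adj u v → Γ.Adj (g +ᵥ u) (g +ᵥ v))

include hedge in
lemma pg_adj_iff (g : Fin d → ℤ) (u v : V) : Γ.Adj (g +ᵥ u) (g +ᵥ v) ↔ Γ.Adj u v := by
  refine ⟨fun h => ?_, hedge g u v⟩
  have := hedge (-g) _ _ h
  simpa [pg_cancel'] using this

include hedge in
lemma pg_nbr (g : Fin d → ℤ) (v : V) :
    Γ.neighborFinset (g +ᵥ v) = (Γ.neighborFinset v).map ⟨fun u => g +ᵥ u, pg_vadd_inj g⟩ := by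
  ext u
  simp only [SimpleGraph.mem_neighborFinset, Finset.mem_map, Function.Embedding.coeFn_mk]
  constructor
  · intro h
    refine ⟨(-g) +ᵥ u, ?_, pg_cancel g u⟩
    rw [← pg_adj_iff Γ hedge g]
    simpa [pg_cancel] using h
  · rintro ⟨a, ha, rfl⟩
    exact hedge g _ _ ha

include hedge in
lemma pg_deg (g : Fin d → ℤ) (v : V) : Γ.degree (g +ᵥ v) = Γ.degree v := by
  rw [← SimpleGraph.card_neighborFinset_eq_degree, ← SimpleGraph.card_neighborFinset_eq_degree,
    pg_nbr Γ hedge, Finset.card_map]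

include hedge in
lemma pg_lap_translate (g : Fin d → ℤ) (f : V → ℂ) :
    graphLaplacian Γ (fun v => f ((-g) +ᵥ v)) = fun v => graphLaplacian Γ f ((-g) +ᵥ v) := by
  funext v
  have hv : v = g +ᵥ ((-g) +ᵥ v) := (pg_cancel g v).symm
  simp only [graphLaplacian]
  conv_lhs => rw [hv]
  rw [pg_deg Γ hedge, pg_nbr Γ hedge, Finset.sum_map]
  simp [pg_deg Γ hedge, pg_cancel']

lemma pg_lap_add (f f' : V → ℂ) :
    graphLaplacian Γ (f + f') = graphLaplacian Γ f + graphLaplacian Γ f' := by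
  funext v
  simp only [graphLaplacian, Pi.add_apply, ← mul_add, ← Finset.sum_add_distrib]
  congr 1
  refine Finset.sum_congr rfl fun w _ => ?_
  ring

lemma pg_lap_smul (z : ℂ) (f : V → ℂ) :
    graphLaplacian Γ (z • f) = z • graphLaplacian Γ f := by
  funext v
  simp only [graphLaplacian, Pi.smul_apply, smul_eq_mul, Finset.mul_sum]
  exact Finset.sum_congr rfl fun w _ => by ring

lemma pg_lap_zero : graphLaplacian Γ (0 : V → ℂ) = 0 := by
  funext v; simp [graphLaplacian]

end aux

section psi
variable {d : ℕ} {V : Type*} [AddAction (Fin d → ℤ) V]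

open Classical in
noncomputable def pgPsi (W : Finset V)
    (c : W → AddMonoidAlgebra ℂ (Fin d → ℤ)) (v : V) : ℂ :=
  ∑ w : W, if h : ∃ g : Fin d → ℤ, g +ᵥ (w : V) = v then (c w).coeff h.choose else 0

variable (hfree : ∀ (g : Fin d → ℤ) (v : V), g +ᵥ v = v → g = 0)

include hfree in
lemma pg_uniq {g₁ g₂ : Fin d → ℤ} {w : V} (h : g₁ +ᵥ w = g₂ +ᵥ w) : g₁ = g₂ := by
  have h2 : (-g₂ + g₁) +ᵥ w = w := by rw [← vadd_vadd, h, pg_cancel']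
  have h3 := hfree _ _ h2
  have h4 : g₂ + (-g₂ + g₁) = g₂ + 0 := by rw [h3]
  simpa [← add_assoc] using h4

lemma pgPsi_add (W : Finset V) (c c' : W → AddMonoidAlgebra ℂ (Fin d → ℤ)) :
    pgPsi W (c + c') = pgPsi W c + pgPsi W c' := by
  funext v
  simp only [pgPsi, Pi.add_apply, ← Finset.sum_add_distrib]
  refine Finset.sum_congr rfl fun w _ => ?_
  split
  · rfl
  · rw [add_zero]

lemma pgPsi_zero (W : Finset V) : pgPsi (d := d) W 0 = 0 := by
  funext v
  simp only [pgPsi, Pi.zero_apply]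
  refine Finset.sum_eq_zero fun w _ => ?_
  split <;> simp

lemma pgPsi_csmul (W : Finset V) (z : ℂ) (c : W → AddMonoidAlgebra ℂ (Fin d → ℤ)) :
    pgPsi W (z • c) = z • pgPsi W c := by
  funext v
  simp only [pgPsi, Pi.smul_apply, smul_eq_mul, Finset.mul_sum]
  refine Finset.sum_congr rfl fun w _ => ?_
  split
  · rfl
  · rw [mul_zero]

include hfree in
open Classical in
lemma pgPsi_single (W : Finset V) (w₀ : W) (g₀ : Fin d → ℤ) (z : ℂ) :
    pgPsi W (Pi.single w₀ (AddMonoidAlgebra.single g₀ z)) =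
      fun v => if v = g₀ +ᵥ (w₀ : V) then z else 0 := by
  funext v
  rw [pgPsi, Finset.sum_eq_single w₀]
  · by_cases h : ∃ g : Fin d → ℤ, g +ᵥ (w₀ : V) = v
    · rw [dif_pos h]
      have hch := h.choose_spec
      by_cases hv : v = g₀ +ᵥ (w₀ : V)
      · rw [if_pos hv]
        have he : h.choose = g₀ := pg_uniq hfree (by rw [hch, hv])
        rw [Pi.single_eq_same, he, AddMonoidAlgebra.coeff_single, Finsupp.single_apply, if_pos rfl]
      · rw [if_neg hv]
        have he : g₀ ≠ h.choose := fun heq => hv (by rw [← hch, ← heq])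
        rw [Pi.single_eq_same, AddMonoidAlgebra.coeff_single, Finsupp.single_apply, if_neg he]
    · rw [dif_neg h, if_neg (fun hv => h ⟨g₀, hv.symm⟩)]
  · intro w _ hw
    split
    · rw [Pi.single_eq_of_ne hw]; rfl
    · rfl
  · intro h; exact absurd (Finset.mem_univ w₀) h

include hfree in
lemma pgPsi_gsmul (W : Finset V) (g : Fin d → ℤ) (z : ℂ)
    (c : W → AddMonoidAlgebra ℂ (Fin d → ℤ)) :
    pgPsi W (AddMonoidAlgebra.single g z • c) = fun v => z * pgPsi W c ((-g) +ᵥ v) := by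
  classical
  funext v
  rw [pgPsi, pgPsi, Finset.mul_sum]
  refine Finset.sum_congr rfl fun w _ => ?_
  have hiff : (∃ g' : Fin d → ℤ, g' +ᵥ (w : V) = v) ↔
      (∃ g' : Fin d → ℤ, g' +ᵥ (w : V) = (-g) +ᵥ v) := by
    constructor
    · rintro ⟨g', hg'⟩; exact ⟨-g + g', by rw [← vadd_vadd, hg']⟩
    · rintro ⟨g', hg'⟩; exact ⟨g + g', by rw [← vadd_vadd, hg', pg_cancel]⟩
  by_cases h : ∃ g' : Fin d → ℤ, g' +ᵥ (w : V) = v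
  · rw [dif_pos h, dif_pos (hiff.mp h)]
    rw [show (AddMonoidAlgebra.single g z • c) w = AddMonoidAlgebra.single g z * c w from rfl,
      AddMonoidAlgebra.coeff_single_mul_apply]
    congr 2
    apply pg_uniq hfree (w := (w : V))
    rw [(hiff.mp h).choose_spec, ← vadd_vadd, h.choose_spec]
  · rw [dif_neg h, dif_neg (fun hh => h (hiff.mpr hh)), mul_zero]

lemma pgPsi_support_finite (W : Finset V) (c : W → AddMonoidAlgebra ℂ (Fin d → ℤ)) :
    (Function.support (pgPsi W c)).Finite := by
  classical
  have hsub : Function.support (pgPsi W c) ⊆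
      ⋃ w : W, (fun g : Fin d → ℤ => g +ᵥ (w : V)) '' ((c w).coeff.support : Set (Fin d → ℤ)) := by
    intro v hv
    rw [Function.mem_support] at hv
    obtain ⟨w, _, hw⟩ := Finset.exists_ne_zero_of_sum_ne_zero hv
    rw [Set.mem_iUnion]
    refine ⟨w, ?_⟩
    by_cases h : ∃ g : Fin d → ℤ, g +ᵥ (w : V) = v
    · rw [dif_pos h] at hw
      exact ⟨h.choose, by simpa using hw, h.choose_spec⟩
    · rw [dif_neg h] at hw; exact absurd rfl hw
  exact Set.Finite.subset (Set.finite_iUnion fun w => Set.Finite.image _ (Finset.finite_toSet _))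
    hsub

end psi

section main
variable {d : ℕ} {V : Type*} [AddAction (Fin d → ℤ) V]
variable (Γ : SimpleGraph V) [Γ.LocallyFinite]

noncomputable def pgE
    (hfree : ∀ (g : Fin d → ℤ) (v : V), g +ᵥ v = v → g = 0)
    (hedge : ∀ (g : Fin d → ℤ) (u v : V), Γ.Adj u v → Γ.Adj (g +ᵥ u) (g +ᵥ v))
    (W : Finset V) (lam : ℂ) :
    Submodule (AddMonoidAlgebra ℂ (Fin d → ℤ)) (↥W → AddMonoidAlgebra ℂ (Fin d → ℤ)) where
  carrier := {c | graphLaplacian Γ (pgPsi W c) = lam • pgPsi W c}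
  add_mem' := by
    intro a b ha hb
    simp only [Set.mem_setOf_eq] at *
    rw [pgPsi_add, pg_lap_add, ha, hb, smul_add]
  zero_mem' := by
    simp only [Set.mem_setOf_eq, pgPsi_zero, pg_lap_zero, smul_zero]
  smul_mem' := by
    have hsingle : ∀ (g : Fin d → ℤ) (z : ℂ) (c : ↥W → AddMonoidAlgebra ℂ (Fin d → ℤ)),
        graphLaplacian Γ (pgPsi W c) = lam • pgPsi W c →
        graphLaplacian Γ (pgPsi W (AddMonoidAlgebra.single g z • c)) =
          lam • pgPsi W (AddMonoidAlgebra.single g z • c) := by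
      intro g z c hc
      rw [pgPsi_gsmul hfree]
      have hz : (fun v => z * pgPsi W c ((-g) +ᵥ v)) =
          z • (fun v => pgPsi W c ((-g) +ᵥ v)) := rfl
      rw [hz, pg_lap_smul, pg_lap_translate Γ hedge, hc]
      funext v
      simp only [Pi.smul_apply, smul_eq_mul]
      ring
    intro a c hc
    simp only [Set.mem_setOf_eq] at *
    induction a using AddMonoidAlgebra.induction with
    | zero => rw [zero_smul, pgPsi_zero, pg_lap_zero, smul_zero]
    | single_add g z b hg hz ih =>
      rw [add_smul, pgPsi_add, pg_lap_add, ih, hsingle g z c hc, smul_add]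

theorem pg_mem_pgE_iff
    (hfree : ∀ (g : Fin d → ℤ) (v : V), g +ᵥ v = v → g = 0)
    (hedge : ∀ (g : Fin d → ℤ) (u v : V), Γ.Adj u v → Γ.Adj (g +ᵥ u) (g +ᵥ v))
    (W : Finset V) (lam : ℂ) (c : ↥W → AddMonoidAlgebra ℂ (Fin d → ℤ)) :
    c ∈ pgE Γ hfree hedge W lam ↔ graphLaplacian Γ (pgPsi W c) = lam • pgPsi W c :=
  Iff.rfl

end main

theorem periodic_graph_finitely_many_finite_support_eigenfunctions
    (d : ℕ) {V : Type*} (Γ : SimpleGraph V) [Γ.LocallyFinite]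
    [AddAction (Fin d → ℤ) V]
    -- the action is free
    (hfree : ∀ (g : Fin d → ℤ) (v : V), g +ᵥ v = v → g = 0)
    -- the action preserves edges
    (hedge : ∀ (g : Fin d → ℤ) (u v : V), Γ.Adj u v → Γ.Adj (g +ᵥ u) (g +ᵥ v))
    -- finitely many orbits, with fundamental domain W
    (W : Finset V) (hW : ∀ v : V, ∃ w ∈ W, ∃ g : Fin d → ℤ, g +ᵥ w = v)
    -- λ is an eigenvalue of Δ on ℓ²(V)
    (lam : ℂ) (hlam : ∃ f : V → ℂ, Memℓp f 2 ∧ f ≠ 0 ∧ graphLaplacian Γ f = lam • f) :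
    ∃ (r : ℕ) (F : Fin r → (V → ℂ)),
      (∀ i, F i ≠ 0 ∧ (Function.support (F i)).Finite ∧
          graphLaplacian Γ (F i) = lam • F i) ∧
      ∀ f : V → ℂ, (Function.support f).Finite → f ≠ 0 →
        graphLaplacian Γ f = lam • f →
        f ∈ Submodule.span ℂ
          {h : V → ℂ | ∃ (i : Fin r) (g : Fin d → ℤ), h = fun v => F i ((-g) +ᵥ v)} := by
  classical
  clear hlam
  set A := AddMonoidAlgebra ℂ (Fin d → ℤ) with hA
  haveI : AddMonoid.FG (Fin d → ℤ) :=
    AddGroup.fg_iff_addMonoid_fg.mp (Module.Finite.iff_addGroup_fg.mp inferInstance)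
  haveI : IsNoetherianRing A := Algebra.FiniteType.isNoetherianRing ℂ A
  obtain ⟨S, hS⟩ := IsNoetherian.noetherian (pgE Γ hfree hedge W lam)
  set S₀ : Finset (↥W → A) := S.filter (fun c => pgPsi W c ≠ 0) with hS₀
  let e : ↥S₀ ≃ Fin S₀.card := Fintype.equivFinOfCardEq (Fintype.card_coe S₀)
  refine ⟨S₀.card, fun i => pgPsi W ((e.symm i : ↥S₀) : ↥W → A), ?_, ?_⟩
  · intro i
    obtain ⟨hmemS, hne⟩ := Finset.mem_filter.mp (e.symm i).2
    refine ⟨hne, pgPsi_support_finite W _, ?_⟩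
    have hc : ((e.symm i : ↥S₀) : ↥W → A) ∈ pgE Γ hfree hedge W lam := by
      rw [← hS]; exact Submodule.subset_span hmemS
    exact (pg_mem_pgE_iff Γ hfree hedge W lam _).mp hc
  · intro f hfin hne heig
    set T : Set (V → ℂ) :=
      {h : V → ℂ | ∃ (i : Fin S₀.card) (g : Fin d → ℤ),
        h = fun v => pgPsi W ((e.symm i : ↥S₀) : ↥W → A) ((-g) +ᵥ v)} with hT
    -- stability of the span under translations
    have Tstab : ∀ (g : Fin d → ℤ) (f0 : V → ℂ), f0 ∈ Submodule.span ℂ T →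
        (fun v => f0 ((-g) +ᵥ v)) ∈ Submodule.span ℂ T := by
      intro g f0 hf0
      induction hf0 using Submodule.span_induction with
      | mem x hx =>
        obtain ⟨i, g', hx⟩ := hx
        apply Submodule.subset_span
        refine ⟨i, g + g', ?_⟩
        funext v
        rw [hx]
        show pgPsi W _ ((-g') +ᵥ ((-g) +ᵥ v)) = pgPsi W _ ((-(g + g')) +ᵥ v)
        rw [vadd_vadd]
        congr 1
        abel
      | zero =>
        exact Submodule.zero_mem _
      | add x y hx hy ihx ihy =>
        have : (fun v => (x + y) ((-g) +ᵥ v)) =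
            (fun v => x ((-g) +ᵥ v)) + (fun v => y ((-g) +ᵥ v)) := rfl
        rw [this]; exact Submodule.add_mem _ ihx ihy
      | smul z x hx ihx =>
        have : (fun v => (z • x) ((-g) +ᵥ v)) = z • (fun v => x ((-g) +ᵥ v)) := rfl
        rw [this]; exact Submodule.smul_mem _ z ihx
    -- every element of the span of S maps into the span of T under pgPsi
    have main : ∀ c : ↥W → A, c ∈ Submodule.span A (↑S : Set (↥W → A)) →
        pgPsi W c ∈ Submodule.span ℂ T := by
      intro c hc
      induction hc using Submodule.span_induction with
      | mem x hx =>
        by_cases hx0 : pgPsi W x = 0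
        · rw [hx0]; exact Submodule.zero_mem _
        · have hxS₀ : x ∈ S₀ := Finset.mem_filter.mpr ⟨hx, hx0⟩
          apply Submodule.subset_span
          refine ⟨e ⟨x, hxS₀⟩, 0, ?_⟩
          funext v
          rw [Equiv.symm_apply_apply]
          rw [neg_zero, zero_vadd]
      | zero => rw [pgPsi_zero]; exact Submodule.zero_mem _
      | add x y hx hy ihx ihy => rw [pgPsi_add]; exact Submodule.add_mem _ ihx ihy
      | smul a x hx ihx =>
        induction a using AddMonoidAlgebra.induction with
        | zero => rw [zero_smul, pgPsi_zero]; exact Submodule.zero_mem _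
        | single_add g z b hg hz ih =>
          rw [add_smul, pgPsi_add]
          refine Submodule.add_mem _ ?_ ih
          rw [pgPsi_gsmul hfree]
          have hz' : (fun v => z * pgPsi W x ((-g) +ᵥ v)) =
              z • (fun v => pgPsi W x ((-g) +ᵥ v)) := rfl
          rw [hz']
          exact Submodule.smul_mem _ z (Tstab g _ ihx)
    -- construct a preimage of f under pgPsi
    choose wv hwv gv hgv using hW
    set s : Finset V := hfin.toFinset with hs
    set c : ↥W → A :=
      ∑ v ∈ s, f v • (Pi.single (⟨wv v, hwv v⟩ : ↥W) (AddMonoidAlgebra.single (gv v) (1 : ℂ)) : ↥W → A) with hc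
    have hΨc : pgPsi W c = f := by
      have hsum : pgPsi W c =
          ∑ v ∈ s, f v • pgPsi W (Pi.single (⟨wv v, hwv v⟩ : ↥W)
            (AddMonoidAlgebra.single (gv v) 1)) := by
        rw [hc]
        induction s using Finset.induction with
        | empty => simp [pgPsi_zero]
        | insert _ _ hmem ih =>
          rw [Finset.sum_insert hmem, Finset.sum_insert hmem, pgPsi_add, pgPsi_csmul, ih]
      funext u
      rw [hsum]
      simp only [Finset.sum_apply, Pi.smul_apply, smul_eq_mul]
      have : ∀ v ∈ s, f v * pgPsi W (Pi.single (⟨wv v, hwv v⟩ : ↥W)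
          (AddMonoidAlgebra.single (gv v) 1)) u = if u = v then f v else 0 := by
        intro v _
        simp only [pgPsi_single hfree]
        rw [hgv v]
        split <;> simp
      rw [Finset.sum_congr rfl this]
      rw [Finset.sum_ite_eq s u (fun v => f v)]
      split
      · rfl
      · next h =>
        symm
        by_contra hfu
        exact h (by rw [hs]; exact (Set.Finite.mem_toFinset hfin).mpr hfu)
    have hcE : c ∈ pgE Γ hfree hedge W lam := by
      rw [pg_mem_pgE_iff, hΨc]; exact heig
    have hcS : c ∈ Submodule.span A (↑S : Set (↥W → A)) := by rw [hS]; exact hcE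
    rw [← hΨc]
    exact main c hcS
end

section
/- Let R = ℂ[z₁,...,z_d] and let M ⊆ R^n be a submodule with a finite free resolution 0 → R^{r_d} → R^{r_{d−1}} → ... → R^{r_1} → R^{r_0} → M → 0. Then the limit lim_{j→∞} dim_ℂ{f ∈ M : |f| ≤ j} / j^d exists and equals Σ_{k=0}^{d} (−1)^k r_k, where |f| denotes the maximum over coordinates of the maximum sup-norm degree of monomials appearing. -/
open MvPolynomial Filter

/-- The sup-norm `|x|` of a vector of polynomials is at most `j`. -/
def normLE {d m : ℕ} (x : Fin m → MvPolynomial (Fin d) ℂ) (j : ℕ) : Prop :=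
  ∀ (k : Fin m) (i : Fin d), (x k).degreeOf i ≤ j

open Module

set_option maxHeartbeats 1000000
set_option synthInstance.maxHeartbeats 400000
set_option maxRecDepth 8000

/-! ### Dimension of the space of polynomials of bounded degree -/

noncomputable def boundedEquiv (d j : ℕ) :
    {f : Fin d →₀ ℕ | ∀ i, f i ≤ j} ≃ (Fin d → Fin (j+1)) :=
  (Equiv.subtypeEquiv Finsupp.equivFunOnFinite (fun _ => Iff.rfl)).trans <|
  (Equiv.subtypePiEquivPi (p := fun _ (x : ℕ) => x ≤ j)).trans <|
  Equiv.piCongrRight fun _ =>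
    ((Equiv.subtypeEquivRight fun _ => (Nat.lt_succ_iff).symm).trans (Fin.equivSubtype).symm)

lemma finrank_restrictDegree (d j : ℕ) :
    Module.finrank ℂ (restrictDegree (Fin d) ℂ j) = (j+1)^d := by
  classical
  have e := boundedEquiv d j
  have : Fintype {f : Fin d →₀ ℕ | ∀ i, f i ≤ j} := Fintype.ofEquiv _ e.symm
  rw [restrictDegree, Module.finrank_eq_card_basis (basisRestrictSupport ℂ _)]
  rw [Fintype.card_congr e]
  simp [Fintype.card_fun]

/-! ### Localization at the fraction field, and ranks -/

section Frac

variable {d : ℕ}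
local notation "R" => MvPolynomial (Fin d) ℂ
local notation "K" => FractionRing (MvPolynomial (Fin d) ℂ)

noncomputable def ιv (m : ℕ) : (Fin m → R) →ₗ[R] (Fin m → K) :=
  LinearMap.pi fun i => (Algebra.linearMap R K).comp (LinearMap.proj i)

lemma ιv_apply (m : ℕ) (x : Fin m → R) (i : Fin m) :
    ιv m x i = algebraMap R K (x i) := rfl

lemma ιv_inj (m : ℕ) : Function.Injective (ιv (d := d) m) := by
  intro x y h
  funext i
  exact IsFractionRing.injective R K (congrFun h i)

noncomputable def fK {a m : ℕ} (f : (Fin a → R) →ₗ[R] (Fin m → R)) :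
    (Fin a → K) →ₗ[K] (Fin m → K) :=
  Matrix.toLin' ((LinearMap.toMatrix' f).map (algebraMap R K))

lemma fK_comm {a m : ℕ} (f : (Fin a → R) →ₗ[R] (Fin m → R)) (x : Fin a → R) :
    fK f (ιv a x) = ιv m (f x) := by
  have hfx : f x = (LinearMap.toMatrix' f).mulVec x := by
    rw [← Matrix.toLin'_apply, Matrix.toLin'_toMatrix']
  funext j
  simp [fK, Matrix.toLin'_apply, Matrix.mulVec, dotProduct, hfx, ιv_apply, map_sum, -LinearMap.toMatrix'_mulVec]

lemma span_image_range {a m : ℕ} (f : (Fin a → R) →ₗ[R] (Fin m → R)) :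
    Submodule.span K (ιv m '' (LinearMap.range f : Set (Fin m → R))) =
      LinearMap.range (fK f) := by
  apply le_antisymm
  · rw [Submodule.span_le]
    rintro _ ⟨x, ⟨x', rfl⟩, rfl⟩
    exact ⟨ιv a x', fK_comm f x'⟩
  · rintro _ ⟨y, rfl⟩
    have hy : y = ∑ i : Fin a, y i • ιv a (Pi.single i 1) := by
      have h1 : ∀ i : Fin a, (ιv a (Pi.single i (1:R)) : Fin a → K) = Pi.single i 1 := by
        intro i; funext j
        simp [ιv_apply, Pi.single_apply, apply_ite (algebraMap R K)]
      simp only [h1]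
      funext j
      simp [Finset.sum_apply, Pi.single_apply]
    rw [hy, map_sum]
    refine Submodule.sum_mem _ fun i _ => ?_
    rw [map_smul, fK_comm]
    exact Submodule.smul_mem _ _ (Submodule.subset_span ⟨f (Pi.single i 1), ⟨_, rfl⟩, rfl⟩)

lemma span_image_ker {a m : ℕ} (f : (Fin a → R) →ₗ[R] (Fin m → R)) :
    Submodule.span K (ιv a '' (LinearMap.ker f : Set (Fin a → R))) =
      LinearMap.ker (fK f) := by
  apply le_antisymm
  · rw [Submodule.span_le]
    rintro _ ⟨x, hx, rfl⟩
    simp only [SetLike.mem_coe, LinearMap.mem_ker] at hx ⊢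
    rw [fK_comm, hx, map_zero]
  · intro y hy
    rw [LinearMap.mem_ker] at hy
    obtain ⟨b, hb⟩ := IsLocalization.exist_integer_multiples
      (nonZeroDivisors R) Finset.univ y
    choose x hx using fun i => hb i (Finset.mem_univ i)
    have hbx : ιv a x = (algebraMap R K (b : R)) • y := by
      funext i
      rw [ιv_apply, hx i, Pi.smul_apply, Algebra.smul_def, smul_eq_mul]
    have hker : f x = 0 := by
      apply ιv_inj m
      rw [← fK_comm, hbx, map_smul, hy]
      simp
    have hbne : (algebraMap R K (b : R) : K) ≠ 0 := fun h =>
      nonZeroDivisors.coe_ne_zero b (IsFractionRing.to_map_eq_zero_iff.mp h)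
    have : y = (algebraMap R K (b : R))⁻¹ • ιv a x := by
      rw [hbx, inv_smul_smul₀ hbne]
    rw [this]
    exact Submodule.smul_mem _ _ (Submodule.subset_span ⟨x, hker, rfl⟩)

noncomputable def rk {m : ℕ} (N : Submodule R (Fin m → R)) : ℕ :=
  Module.finrank K (Submodule.span K (ιv m '' (N : Set (Fin m → R))))

lemma rk_rank_nullity {a m : ℕ} (f : (Fin a → R) →ₗ[R] (Fin m → R)) :
    rk (LinearMap.range f) + rk (LinearMap.ker f) = a := by
  rw [rk, rk, span_image_range, span_image_ker]
  exact (LinearMap.finrank_range_add_finrank_ker (fK f)).trans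
    ((Module.finrank_fintype_fun_eq_card _).trans (by simp))

/-! ### Euler characteristic of a finite free resolution -/

lemma euler (n : ℕ)
    (M : Submodule R (Fin n → R)) (r : ℕ → ℕ)
    (hr : ∀ k, k > d → r k = 0)
    (ε : (Fin (r 0) → R) →ₗ[R] (Fin n → R))
    (φ : ∀ k : ℕ, (Fin (r (k+1)) → R) →ₗ[R] (Fin (r k) → R))
    (hrange : LinearMap.range ε = M)
    (hexact0 : LinearMap.ker ε = LinearMap.range (φ 0))
    (hexact : ∀ k : ℕ, LinearMap.ker (φ k) = LinearMap.range (φ (k+1))) :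
    (rk M : ℤ) = ∑ k ∈ Finset.range (d + 1), (-1 : ℤ) ^ k * (r k : ℤ) := by
  set G : ℕ → ℤ := fun k => Nat.rec (rk (LinearMap.range ε))
    (fun k _ => (rk (LinearMap.range (φ k)) : ℤ)) k with hG
  have hGr : ∀ k, (r k : ℤ) = G k + G (k + 1) := by
    intro k
    cases k with
    | zero =>
      have := rk_rank_nullity ε
      rw [hexact0] at this
      show (r 0 : ℤ) = (rk (LinearMap.range ε) : ℤ) + (rk (LinearMap.range (φ 0)) : ℤ)
      omega
    | succ k =>
      have := rk_rank_nullity (φ k)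
      rw [hexact k] at this
      show ((r (k+1) : ℕ) : ℤ) = (rk (LinearMap.range (φ k)) : ℤ) +
        (rk (LinearMap.range (φ (k+1))) : ℤ)
      omega
  have hGd : (rk (LinearMap.range (φ d)) : ℤ) = 0 := by
    have h1 := rk_rank_nullity (φ d)
    have h2 := hr (d+1) (by omega)
    omega
  have : ∀ k, (-1 : ℤ) ^ k * (r k : ℤ) =
      (fun k => (-1 : ℤ) ^ k * G k) k - (fun k => (-1 : ℤ) ^ k * G k) (k + 1) := by
    intro k
    rw [hGr k]
    ring
  rw [Finset.sum_congr rfl (fun k _ => this k), Finset.sum_range_sub', ← hrange]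
  have hG0 : G 0 = (rk (LinearMap.range ε) : ℤ) := rfl
  have hG1 : G (d+1) = (rk (LinearMap.range (φ d)) : ℤ) := rfl
  rw [hG0, hG1, hGd]
  ring

end Frac

/-! ### Choosing coordinates and independent families -/

lemma exists_coords_general {𝕜 : Type*} [Field 𝕜] {n : ℕ} (V : Submodule 𝕜 (Fin n → 𝕜)) :
    ∃ c : Fin (finrank 𝕜 V) → Fin n, ∀ v ∈ V, (∀ q, v (c q) = 0) → v = 0 := by
  classical
  haveI : FiniteDimensional 𝕜 ↥V := inferInstance
  set e : Fin n → Module.Dual 𝕜 ↥V := fun i => (LinearMap.proj i).comp V.subtype with he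
  set W : Submodule 𝕜 (Module.Dual 𝕜 ↥V) := Submodule.span 𝕜 (Set.range e) with hWdef
  have hco : W.dualCoannihilator = ⊥ := by
    rw [eq_bot_iff]
    intro v hv
    rw [Submodule.mem_dualCoannihilator] at hv
    have hv0 : (v : Fin n → 𝕜) = 0 := by
      funext i
      exact hv (e i) (Submodule.subset_span (Set.mem_range_self i))
    rw [Submodule.mem_bot]
    exact Subtype.ext hv0
  have hWr : finrank 𝕜 ↥W = finrank 𝕜 ↥V := by
    have h1 := Subspace.finrank_add_finrank_dualCoannihilator_eq W
    rw [hco, finrank_bot] at h1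
    omega
  obtain ⟨b, hbsub, hbspan, hbind⟩ := exists_linearIndependent 𝕜 (Set.range e)
  have hbW : Submodule.span 𝕜 b = W := hbspan
  have hbfin : b.Finite := hbind.setFinite
  haveI : Fintype b := hbfin.fintype
  have hbcard : Fintype.card b = finrank 𝕜 ↥V := by
    rw [← hWr, ← hbW, finrank_span_set_eq_card hbind, Set.toFinset_card]
  have hpick : ∀ f : b, ∃ i : Fin n, e i = (f : Module.Dual 𝕜 ↥V) := fun f => hbsub f.2
  choose pick hpick' using hpick
  let eqv : Fin (finrank 𝕜 ↥V) ≃ b := (Fintype.equivFinOfCardEq hbcard).symm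
  refine ⟨fun q => pick (eqv q), ?_⟩
  intro x hx hxz
  set v : ↥V := ⟨x, hx⟩ with hvdef
  have hb0 : ∀ f : b, (f : Module.Dual 𝕜 ↥V) v = 0 := by
    intro f
    have heq : pick (eqv (eqv.symm f)) = pick f := by rw [Equiv.apply_symm_apply]
    have hx0 : x (pick f) = 0 := by rw [← heq]; exact hxz (eqv.symm f)
    rw [← hpick' f]
    exact hx0
  have hW0 : ∀ φ ∈ W, φ v = 0 := by
    intro φ hφ
    rw [← hbW] at hφ
    induction hφ using Submodule.span_induction with
    | mem φ hφ => exact hb0 ⟨φ, hφ⟩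
    | zero => simp
    | add φ ψ _ _ h1 h2 => simp [h1, h2]
    | smul a φ _ h => simp [h]
  have hv : v ∈ W.dualCoannihilator := (Submodule.mem_dualCoannihilator v).mpr hW0
  rw [hco, Submodule.mem_bot] at hv
  exact congrArg Subtype.val hv

section Frac2

variable {d : ℕ}
local notation "R" => MvPolynomial (Fin d) ℂ
local notation "K" => FractionRing (MvPolynomial (Fin d) ℂ)

lemma exists_coords {n : ℕ} (M : Submodule R (Fin n → R)) :
    ∃ c : Fin (rk M) → Fin n, ∀ x ∈ M, (∀ q, x (c q) = 0) → x = 0 := by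
  obtain ⟨c, hc⟩ := exists_coords_general (Submodule.span K (ιv n '' (M : Set (Fin n → R))))
  refine ⟨c, fun x hx hxz => ?_⟩
  have hxV : ιv n x ∈ Submodule.span K (ιv n '' (M : Set (Fin n → R))) :=
    Submodule.subset_span ⟨x, hx, rfl⟩
  have h0 : ιv n x = 0 := by
    refine hc _ hxV fun q => ?_
    show algebraMap R K (x (c q)) = 0
    rw [hxz q, map_zero]
  exact ιv_inj n (by rw [h0, map_zero])

lemma exists_indep {n : ℕ} (M : Submodule R (Fin n → R)) :
    ∃ g : Fin (rk M) → (Fin n → R), (∀ q, g q ∈ M) ∧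
      LinearIndependent K (fun q => ιv n (g q)) := by
  classical
  obtain ⟨b, hbsub, hbspan, hbind⟩ := exists_linearIndependent K (ιv n '' (M : Set (Fin n → R)))
  have hbfin : b.Finite := hbind.setFinite
  haveI : Fintype b := hbfin.fintype
  have hbcard : Fintype.card b = rk M := by
    rw [rk, ← hbspan, finrank_span_set_eq_card hbind, Set.toFinset_card]
  have hpick : ∀ f : b, ∃ x : Fin n → R, x ∈ M ∧ ιv n x = (f : Fin n → K) := by
    intro f
    obtain ⟨x, hx, hfx⟩ := hbsub f.2
    exact ⟨x, hx, hfx⟩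
  choose g hgM hgι using hpick
  let eqv : Fin (rk M) ≃ b := (Fintype.equivFinOfCardEq hbcard).symm
  refine ⟨fun q => g (eqv q), fun q => hgM (eqv q), ?_⟩
  have : (fun q : Fin (rk M) => ιv n (g (eqv q))) = (Subtype.val ∘ eqv) := by
    funext q; rw [hgι (eqv q)]; rfl
  rw [this]
  exact hbind.comp eqv eqv.injective

/-! ### The spaces of bounded-degree elements -/

noncomputable def Bj (d n j : ℕ) : Submodule ℂ (Fin n → MvPolynomial (Fin d) ℂ) :=
  Submodule.pi Set.univ (fun _ : Fin n => restrictDegree (Fin d) ℂ j)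

lemma mem_restrictDegree_iff_degreeOf (j : ℕ) (p : R) :
    p ∈ restrictDegree (Fin d) ℂ j ↔ ∀ i, p.degreeOf i ≤ j := by
  classical
  rw [mem_restrictDegree_iff_sup]
  simp [degreeOf_def]

lemma mem_Bj {n j : ℕ} (x : Fin n → R) :
    x ∈ Bj d n j ↔ normLE x j := by
  constructor
  · intro h k i
    exact (mem_restrictDegree_iff_degreeOf j (x k)).mp (h k (Set.mem_univ k)) i
  · intro h k _
    exact (mem_restrictDegree_iff_degreeOf j (x k)).mpr (h k)

lemma span_eq_inf {n : ℕ} (M : Submodule R (Fin n → R)) (j : ℕ) :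
    Submodule.span ℂ {x | x ∈ M ∧ normLE x j} =
      (M.restrictScalars ℂ) ⊓ Bj d n j := by
  have hset : {x | x ∈ M ∧ normLE x j} =
      ((M.restrictScalars ℂ ⊓ Bj d n j : Submodule ℂ (Fin n → R)) : Set (Fin n → R)) := by
    ext x
    simp only [Set.mem_setOf_eq, SetLike.mem_coe, Submodule.mem_inf,
      Submodule.restrictScalars_mem, mem_Bj]
  rw [hset, Submodule.span_eq]

/-- the projection map on coordinates `c` -/
noncomputable def projMap {n j : ℕ} (M : Submodule R (Fin n → R)) {η : Type*}
    (c : η → Fin n) :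
    ↥(M.restrictScalars ℂ ⊓ Bj d n j) →ₗ[ℂ] (η → ↥(restrictDegree (Fin d) ℂ j)) where
  toFun x := fun q => ⟨(x : Fin n → R) (c q), x.2.2 (c q) (Set.mem_univ _)⟩
  map_add' x y := by funext q; rfl
  map_smul' a x := by funext q; rfl

lemma finrank_pi_D {j : ℕ} (η : Type*) [Fintype η] :
    finrank ℂ (η → ↥(restrictDegree (Fin d) ℂ j)) = Fintype.card η * (j+1)^d := by
  rw [Module.finrank_pi_fintype]
  simp only [finrank_restrictDegree]
  rw [Finset.sum_const, Finset.card_univ, smul_eq_mul]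

instance fd_inf {n j : ℕ} (M : Submodule R (Fin n → R)) :
    FiniteDimensional ℂ ↥(M.restrictScalars ℂ ⊓ Bj d n j) := by
  apply FiniteDimensional.of_injective (projMap M (id : Fin n → Fin n))
  intro x y hxy
  apply Subtype.ext
  funext k
  have := congrFun hxy k
  exact congrArg Subtype.val this

lemma dim_upper {n : ℕ} (M : Submodule R (Fin n → R)) (j : ℕ) :
    finrank ℂ ↥(M.restrictScalars ℂ ⊓ Bj d n j) ≤ rk M * (j+1)^d := by
  obtain ⟨c, hc⟩ := exists_coords M
  have hinj : Function.Injective ((projMap M c : ↥(M.restrictScalars ℂ ⊓ Bj d n j) →ₗ[ℂ]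
      (Fin (rk M) → ↥(restrictDegree (Fin d) ℂ j)))) := by
    intro x y hxy
    rw [← sub_eq_zero] at hxy ⊢
    rw [← map_sub] at hxy
    have hz : ∀ q, ((x - y : ↥(M.restrictScalars ℂ ⊓ Bj d n j)) : Fin n → R) (c q) = 0 := by
      intro q
      exact congrArg Subtype.val (congrFun hxy q)
    have hmem : ((x - y : ↥(M.restrictScalars ℂ ⊓ Bj d n j)) : Fin n → R) ∈ M := (x - y).2.1
    have := hc _ hmem hz
    exact Subtype.ext this
  calc finrank ℂ ↥(M.restrictScalars ℂ ⊓ Bj d n j)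
      ≤ finrank ℂ (Fin (rk M) → ↥(restrictDegree (Fin d) ℂ j)) :=
        LinearMap.finrank_le_finrank_of_injective hinj
    _ = rk M * (j+1)^d := by rw [finrank_pi_D]; simp

lemma dim_lower {n : ℕ} (M : Submodule R (Fin n → R)) :
    ∃ c₀ : ℕ, ∀ j : ℕ,
      rk M * (j+1)^d ≤ finrank ℂ ↥(M.restrictScalars ℂ ⊓ Bj d n (j + c₀)) := by
  classical
  obtain ⟨g, hgM, hgind⟩ := exists_indep M
  set c₀ := Finset.univ.sup (fun q : Fin (rk M) => Finset.univ.sup (fun k : Fin n =>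
    Finset.univ.sup (fun i : Fin d => degreeOf i (g q k)))) with hc₀
  have hgdeg : ∀ q k i, degreeOf i (g q k) ≤ c₀ := by
    intro q k i
    calc degreeOf i (g q k) ≤ Finset.univ.sup (fun i : Fin d => degreeOf i (g q k)) :=
          Finset.le_sup (f := fun i : Fin d => degreeOf i (g q k)) (Finset.mem_univ i)
      _ ≤ Finset.univ.sup (fun k : Fin n => Finset.univ.sup
            (fun i : Fin d => degreeOf i (g q k))) := Finset.le_sup
            (f := fun k : Fin n => Finset.univ.sup (fun i : Fin d => degreeOf i (g q k)))
            (Finset.mem_univ k)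
      _ ≤ c₀ := Finset.le_sup (f := fun q : Fin (rk M) => Finset.univ.sup
            (fun k : Fin n => Finset.univ.sup (fun i : Fin d => degreeOf i (g q k))))
            (Finset.mem_univ q)
  refine ⟨c₀, fun j => ?_⟩
  set Θ : (Fin (rk M) → ↥(restrictDegree (Fin d) ℂ j)) →ₗ[ℂ] (Fin n → R) :=
    ∑ q : Fin (rk M), ((LinearMap.toSpanSingleton R (Fin n → R) (g q)).restrictScalars ℂ).comp
      (((restrictDegree (Fin d) ℂ j).subtype).comp (LinearMap.proj q)) with hΘdef
  have hΘ : ∀ p, Θ p = ∑ q, ((p q : R) • g q) := by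
    intro p
    simp [hΘdef, LinearMap.sum_apply, LinearMap.toSpanSingleton_apply]
  have hmem : ∀ p, Θ p ∈ M.restrictScalars ℂ ⊓ Bj d n (j + c₀) := by
    intro p
    rw [Submodule.mem_inf]
    constructor
    · rw [Submodule.restrictScalars_mem, hΘ]
      exact Submodule.sum_mem _ fun q _ => M.smul_mem _ (hgM q)
    · rw [mem_Bj]
      intro k i
      have hco : Θ p k = ∑ q, (p q : R) * g q k := by
        rw [hΘ, Finset.sum_apply]
        simp [Pi.smul_apply, smul_eq_mul]
      rw [hco]
      refine le_trans (degreeOf_sum_le _ _ _) (Finset.sup_le fun q _ => ?_)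
      refine le_trans (degreeOf_mul_le _ _ _) ?_
      exact add_le_add ((mem_restrictDegree_iff_degreeOf j _).mp (p q).2 i) (hgdeg q k i)
  set Θ' := Θ.codRestrict (M.restrictScalars ℂ ⊓ Bj d n (j + c₀)) hmem with hΘ'def
  have hinj : Function.Injective Θ' := by
    intro p p' h
    rw [← sub_eq_zero] at h ⊢
    rw [← map_sub] at h
    set q := p - p' with hq
    have h0 : Θ q = 0 := congrArg Subtype.val h
    have hι : ∑ i : Fin (rk M), algebraMap R K ((q i : R)) • ιv n (g i) = 0 := by
      have := congrArg (ιv n) (hΘ q ▸ h0)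
      rw [map_sum, map_zero] at this
      rw [← this]
      refine Finset.sum_congr rfl fun i _ => ?_
      rw [map_smul]
      exact (algebraMap_smul K ((q i : R)) (ιv n (g i)))
    have hz := Fintype.linearIndependent_iff.mp hgind
      (fun i => algebraMap R K ((q i : R))) hι
    funext i
    have : (q i : R) = 0 := IsFractionRing.injective R K (by simpa using hz i)
    exact Subtype.ext this
  calc rk M * (j+1)^d
      = finrank ℂ (Fin (rk M) → ↥(restrictDegree (Fin d) ℂ j)) := by
        rw [finrank_pi_D]; simp
    _ ≤ finrank ℂ ↥(M.restrictScalars ℂ ⊓ Bj d n (j + c₀)) :=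
        LinearMap.finrank_le_finrank_of_injective hinj

end Frac2

/-! ### Limit computation -/

lemma aux_tendsto (ρ a : ℝ) (d : ℕ) :
    Tendsto (fun j : ℕ => ρ * ((j : ℝ) + a) ^ d / (j : ℝ) ^ d) atTop (nhds ρ) := by
  have h0 : Tendsto (fun j : ℕ => a / (j : ℝ)) atTop (nhds 0) :=
    tendsto_const_div_atTop_nhds_zero_nat a
  have h1 : Tendsto (fun j : ℕ => ρ * (1 + a / (j : ℝ)) ^ d) atTop (nhds ρ) := by
    have h2 := ((tendsto_const_nhds (x := (1:ℝ)) (f := atTop (α := ℕ))).add h0).pow d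
    have h3 := (tendsto_const_nhds (x := ρ) (f := atTop (α := ℕ))).mul h2
    simpa using h3
  refine h1.congr' ?_
  filter_upwards [eventually_ge_atTop 1] with j hj
  have hjne : (j : ℝ) ≠ 0 := by positivity
  have : (1 : ℝ) + a / j = ((j : ℝ) + a) / j := by field_simp
  rw [this, div_pow, mul_div_assoc]

theorem density_formula_from_free_resolution (d n : ℕ)
    (M : Submodule (MvPolynomial (Fin d) ℂ) (Fin n → MvPolynomial (Fin d) ℂ))
    (r : ℕ → ℕ)
    -- a finite free resolution 0 → R^{r_d} → ⋯ → R^{r_1} → R^{r_0} → M → 0,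
    -- encoded with trivial modules beyond stage d
    (hr : ∀ k, k > d → r k = 0)
    (ε : (Fin (r 0) → MvPolynomial (Fin d) ℂ) →ₗ[MvPolynomial (Fin d) ℂ]
         (Fin n → MvPolynomial (Fin d) ℂ))
    (φ : ∀ k : ℕ, (Fin (r (k+1)) → MvPolynomial (Fin d) ℂ) →ₗ[MvPolynomial (Fin d) ℂ]
         (Fin (r k) → MvPolynomial (Fin d) ℂ))
    (hrange : LinearMap.range ε = M)
    (hexact0 : LinearMap.ker ε = LinearMap.range (φ 0))
    (hexact : ∀ k : ℕ, LinearMap.ker (φ k) = LinearMap.range (φ (k+1))) :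
    Tendsto
      (fun j : ℕ =>
        (Module.finrank ℂ (Submodule.span ℂ {x | x ∈ M ∧ normLE x j}) : ℝ) / (j : ℝ) ^ d)
      atTop
      (nhds (∑ k ∈ Finset.range (d + 1), (-1 : ℝ) ^ k * (r k : ℝ))) := by
  have heuler := euler n M r hr ε φ hrange hexact0 hexact
  have hsum : ∑ k ∈ Finset.range (d + 1), (-1 : ℝ) ^ k * (r k : ℝ) = (rk M : ℝ) := by
    have h := congrArg (fun z : ℤ => (z : ℝ)) heuler
    push_cast at h
    exact h.symm
  rw [hsum]
  have hfun : (fun j : ℕ =>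
        ((Module.finrank ℂ (Submodule.span ℂ {x | x ∈ M ∧ normLE x j}) : ℝ) / (j : ℝ) ^ d)) =
      fun j : ℕ =>
        ((Module.finrank ℂ ↥(M.restrictScalars ℂ ⊓ Bj d n j) : ℝ) / (j : ℝ) ^ d) := by
    funext j
    rw [span_eq_inf]
  rw [hfun]
  obtain ⟨c₀, hlow⟩ := dim_lower M
  refine tendsto_of_tendsto_of_tendsto_of_le_of_le'
    ((aux_tendsto (rk M : ℝ) (1 - (c₀ : ℝ)) d)) ((aux_tendsto (rk M : ℝ) 1 d)) ?_ ?_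
  · filter_upwards [eventually_ge_atTop (c₀ + 1)] with j hj
    have hc : c₀ ≤ j := by omega
    have h1 : 1 ≤ j := by omega
    have hQ := hlow (j - c₀)
    rw [Nat.sub_add_cancel hc] at hQ
    have hQR : (rk M : ℝ) * ((j : ℝ) + (1 - (c₀ : ℝ))) ^ d ≤
        (finrank ℂ ↥(M.restrictScalars ℂ ⊓ Bj d n j) : ℝ) := by
      have := (Nat.cast_le (α := ℝ)).mpr hQ
      push_cast [Nat.cast_sub hc] at this
      calc (rk M : ℝ) * ((j : ℝ) + (1 - (c₀ : ℝ))) ^ d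
          = (rk M : ℝ) * ((j : ℝ) - (c₀ : ℝ) + 1) ^ d := by ring_nf
        _ ≤ _ := this
    have hjpos : (0:ℝ) ≤ (j : ℝ) ^ d := by positivity
    exact div_le_div_of_nonneg_right hQR hjpos
  · filter_upwards [eventually_ge_atTop 1] with j hj
    have hQ := dim_upper M j
    have hQR : (finrank ℂ ↥(M.restrictScalars ℂ ⊓ Bj d n j) : ℝ) ≤
        (rk M : ℝ) * ((j : ℝ) + 1) ^ d := by
      have := (Nat.cast_le (α := ℝ)).mpr hQ
      push_cast at this
      exact this
    have hjpos : (0:ℝ) ≤ (j : ℝ) ^ d := by positivity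
    exact div_le_div_of_nonneg_right hQR hjpos
end

section
/- For the Kagome lattice eigenfunction: in ℂ[z₁,z₂], for every h ∈ ℂ[z₁,z₂] the triple (f₁,f₂,f₃) := ((z₁−z₂)h, (1−z₁)h, (z₂−1)h) satisfies the system (z₂−1)f₁ = (z₁−z₂)f₃ and (z₂−1)f₂ = (1−z₁)f₃; conversely, every solution (f₁,f₂,f₃) ∈ ℂ[z₁,z₂]³ of this system is of this form for a unique h ∈ ℂ[z₁,z₂]. -/
open MvPolynomial

noncomputable def e2 : MvPolynomial (Fin 2) ℂ ≃ₐ[ℂ] Polynomial (MvPolynomial (Fin 1) ℂ) :=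
  (renameEquiv ℂ (Equiv.swap (0 : Fin 2) 1)).trans (finSuccEquiv ℂ 1)

lemma prime_q : Prime ((X 1 : MvPolynomial (Fin 2) ℂ) - 1) := by
  rw [← MulEquiv.prime_iff e2.toMulEquiv]
  have h : e2.toMulEquiv ((X 1 : MvPolynomial (Fin 2) ℂ) - 1) = Polynomial.X - Polynomial.C 1 := by
    show e2 (X 1 - 1) = _
    simp [e2, finSuccEquiv_apply]
  rw [h]
  exact Polynomial.prime_X_sub_C 1

lemma not_dvd_q1 : ¬ ((X 1 : MvPolynomial (Fin 2) ℂ) - 1) ∣ (X 0 - X 1) := by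
  rintro ⟨q, hq⟩
  have := congrArg (eval fun i : Fin 2 => if i = 0 then (2 : ℂ) else 1) hq
  simp at this
  norm_num at this

lemma not_dvd_q2 : ¬ ((X 1 : MvPolynomial (Fin 2) ℂ) - 1) ∣ (1 - X 0) := by
  rintro ⟨q, hq⟩
  have := congrArg (eval fun i : Fin 2 => if i = 0 then (2 : ℂ) else 1) hq
  simp at this
  norm_num at this

theorem kagome_solutions_parametrized :
    (∀ h : MvPolynomial (Fin 2) ℂ,
      (pz₂ - 1) * ((pz₁ - pz₂) * h) = (pz₁ - pz₂) * ((pz₂ - 1) * h) ∧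
      (pz₂ - 1) * ((1 - pz₁) * h) = (1 - pz₁) * ((pz₂ - 1) * h)) ∧
    (∀ f₁ f₂ f₃ : MvPolynomial (Fin 2) ℂ,
      (pz₂ - 1) * f₁ = (pz₁ - pz₂) * f₃ → (pz₂ - 1) * f₂ = (1 - pz₁) * f₃ →
      ∃! h : MvPolynomial (Fin 2) ℂ,
        f₁ = (pz₁ - pz₂) * h ∧ f₂ = (1 - pz₁) * h ∧ f₃ = (pz₂ - 1) * h) := by
  have hq : Prime ((pz₂ : MvPolynomial (Fin 2) ℂ) - 1) := prime_q
  have hqne : ((pz₂ : MvPolynomial (Fin 2) ℂ) - 1) ≠ 0 := hq.ne_zero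
  constructor
  · intro h; constructor <;> ring
  · intro f₁ f₂ f₃ h1 h2
    have hd : ((pz₂ : MvPolynomial (Fin 2) ℂ) - 1) ∣ f₃ := by
      rcases (hq.dvd_mul.mp ⟨f₁, h1.symm⟩) with h | h
      · exact absurd h not_dvd_q1
      · exact h
    obtain ⟨h, hh⟩ := hd
    refine ⟨h, ⟨?_, ?_, hh⟩, ?_⟩
    · apply mul_left_cancel₀ hqne
      rw [h1, hh]; ring
    · apply mul_left_cancel₀ hqne
      rw [h2, hh]; ring
    · rintro g ⟨-, -, hg3⟩
      apply mul_left_cancel₀ hqne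
      rw [← hh, ← hg3]
end
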